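/- arXiv:1902.03213 — 2 statements merged into one kernel-verified Lean document; each statement's English description precedes it below -/
import Mathlib

section
/- For any integers r ≥ 3, t ≥ 2 and k ≥ 2(t−1)(r−2)+2, ex_r(n, H_t P_k) = (t−1−o(1))·C(n,2) and ex_r(n, B_t P_k) = (t−1−o(1))·C(n,2), where P_k is the path on k vertices. -/
open Finset

/-- `H` contains a `t`-heavy copy of the graph `F`: an injective placement of `V(F)`
such that every edge of `F` is contained in at least `t` hyperedges of `H`. -/
def HasHeavyCopy {V α : Type*} [DecidableEq V] (H : Finset (Finset V))
    (F : SimpleGraph α) (t : ℕ) : Prop :=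
  ∃ i : α ↪ V, ∀ x y, F.Adj x y →
    t ≤ (H.filter (fun A => i x ∈ A ∧ i y ∈ A)).card

/-- `H` contains a `t`-wise Berge copy of the graph `F`: an injective placement of `V(F)`
together with `t` hyperedges assigned to each edge of `F`, pairwise disjoint over distinct
edges, each containing both endpoints of its edge. -/
def HasBergeCopy {V α : Type*} (H : Finset (Finset V))
    (F : SimpleGraph α) (t : ℕ) : Prop :=
  ∃ (i : α ↪ V) (h : Sym2 α → Finset (Finset V)),
    (∀ e ∈ F.edgeSet, h e ⊆ H ∧ (h e).card = t ∧ ∀ A ∈ h e, ∀ x ∈ e, i x ∈ A) ∧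
    ∀ e ∈ F.edgeSet, ∀ e' ∈ F.edgeSet, e ≠ e' → Disjoint (h e) (h e')

/-- The Turán number of `t`-heavy copies of `F` for `r`-uniform hypergraphs on `n` vertices. -/
noncomputable def exHeavy {α : Type*} (n r t : ℕ) (F : SimpleGraph α) : ℕ :=
  sSup {m | ∃ H : Finset (Finset (Fin n)), (∀ A ∈ H, A.card = r) ∧
    ¬ HasHeavyCopy H F t ∧ H.card = m}

/-- The Turán number of `t`-wise Berge copies of `F` for `r`-uniform hypergraphs on `n` vertices. -/
noncomputable def exBerge {α : Type*} (n r t : ℕ) (F : SimpleGraph α) : ℕ :=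
  sSup {m | ∃ H : Finset (Finset (Fin n)), (∀ A ∈ H, A.card = r) ∧
    ¬ HasBergeCopy H F t ∧ H.card = m}

/-- `G` contains a copy of `F` as a subgraph. -/
def GraphContains {α β : Type*} (F : SimpleGraph α) (G : SimpleGraph β) : Prop :=
  ∃ f : α ↪ β, ∀ x y, F.Adj x y → G.Adj (f x) (f y)

/-- The number of `r`-cliques of `G`. -/
noncomputable def cliqueCount {β : Type*} [Fintype β] [DecidableEq β]
    (r : ℕ) (G : SimpleGraph β) : ℕ :=
  letI := Classical.decRel G.Adj
  (G.cliqueFinset r).card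

/-- The number of edges of `G`. -/
noncomputable def edgeCount {β : Type*} [Fintype β] [DecidableEq β] (G : SimpleGraph β) : ℕ :=
  letI := Classical.decRel G.Adj
  G.edgeFinset.card

/-- The generalized Turán number `ex(n, K_r, F)`. -/
noncomputable def exClique {α : Type*} (n r : ℕ) (F : SimpleGraph α) : ℕ :=
  sSup {m | ∃ G : SimpleGraph (Fin n), ¬ GraphContains F G ∧ cliqueCount r G = m}

/-- The Turán number `ex(n, F)`. -/
noncomputable def exTuran {α : Type*} (n : ℕ) (F : SimpleGraph α) : ℕ :=
  sSup {m | ∃ G : SimpleGraph (Fin n), ¬ GraphContains F G ∧ edgeCount G = m}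

/-!
Upper bound. Match hyperedges injectively with distinct pairs of vertices they contain, maximally.
At most `C(n, 2)` hyperedges are matched, and every pair inside an unmatched hyperedge is matched;
so a `t`-wise Berge copy among the unmatched hyperedges extends to a `(t + 1)`-wise one by adding
to each edge its matched hyperedge, whence `ex_r(n, B_{t+1} F) ≤ ex_r(n, B_t F) + C(n, 2)`. For
`t = 1` the matched pairs form a `P_k`-free graph, hence one in which every vertex set has a vertex
of degree `< k - 1`; such a graph has `O(n)` edges and `O(n)` `r`-cliques, and the unmatched
hyperedges are `r`-cliques of it.

Lower bound. Take `t - 1` disjoint blocks of `r - 2` vertices and all unions of a block with a pair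
of vertices outside the blocks. A pair outside the blocks lies in only `t - 1` hyperedges, so each
of the `(t - 1)(r - 2) + 1` disjoint edges of a `t`-heavy path needs its own vertex in the blocks.
-/

open Finset SimpleGraph Filter Topology

section Degeneracy

variable {V : Type*} [DecidableEq V] {G : SimpleGraph V} [DecidableRel G.Adj]

lemma exists_injective_path_of_le_degree {s : Finset V} (hs : s.Nonempty) {m : ℕ}
    (hdeg : ∀ v ∈ s, m ≤ #{w ∈ s | G.Adj v w}) {j : ℕ} (hj : j ≤ m) :
    ∃ f : Fin (j + 1) → V, Function.Injective f ∧ (∀ a, f a ∈ s) ∧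
      ∀ a : Fin j, G.Adj (f a.castSucc) (f a.succ) := by
  induction j with
  | zero =>
    obtain ⟨v, hv⟩ := hs
    exact ⟨fun _ => v, fun a b _ => Fin.ext (by omega), fun _ => hv, fun a => a.elim0⟩
  | succ j ih =>
    obtain ⟨f, hf_inj, hf_mem, hf_adj⟩ := ih (by omega)
    set u := f (Fin.last j)
    obtain ⟨w, hw, hw_new⟩ : ∃ w ∈ {w ∈ s | G.Adj u w}, w ∉ (univ.image f).erase u := by
      refine exists_mem_notMem_of_card_lt_card ?_
      rw [card_erase_of_mem (mem_image_of_mem f (mem_univ _)), card_image_of_injective _ hf_inj,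
        card_univ, Fintype.card_fin]
      have := hdeg u (hf_mem _)
      omega
    rw [mem_filter] at hw
    have hw_range : w ∉ Set.range f := by
      rintro ⟨a, rfl⟩
      exact hw_new (mem_erase.2 ⟨hw.2.ne', mem_image_of_mem f (mem_univ a)⟩)
    refine ⟨Fin.snoc f w, Fin.snoc_injective_of_injective hf_inj hw_range, fun a => ?_, fun a => ?_⟩
    · cases a using Fin.lastCases <;> simp [hw.1, hf_mem]
    · cases a using Fin.lastCases with
      | last => rw [Fin.succ_last, Fin.snoc_last, Fin.snoc_castSucc]; exact hw.2
      | cast a => rw [Fin.succ_castSucc, Fin.snoc_castSucc, Fin.snoc_castSucc]; exact hf_adj a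

lemma graphContains_pathGraph_of_le_degree {s : Finset V} (hs : s.Nonempty) {m : ℕ}
    (hdeg : ∀ v ∈ s, m ≤ #{w ∈ s | G.Adj v w}) : GraphContains (pathGraph (m + 1)) G := by
  obtain ⟨f, hf_inj, -, hf_adj⟩ := exists_injective_path_of_le_degree hs hdeg le_rfl
  have hf_succ : ∀ x y : Fin (m + 1), x.val + 1 = y.val → G.Adj (f x) (f y) := by
    intro x y hxy
    convert hf_adj ⟨x, by omega⟩ using 2 <;> ext <;> simp [hxy]
  refine ⟨⟨f, hf_inj⟩, fun x y hxy => ?_⟩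
  rcases pathGraph_adj.1 hxy with h | h
  exacts [hf_succ x y h, (hf_succ y x h).symm]

lemma exists_degree_lt_of_not_graphContains_pathGraph {k : ℕ}
    (hG : ¬ GraphContains (pathGraph k) G) {s : Finset V} (hs : s.Nonempty) :
    ∃ v ∈ s, #{w ∈ s | G.Adj v w} < k - 1 := by
  cases k with
  | zero => exact absurd ⟨⟨Fin.elim0, fun a => a.elim0⟩, fun a => a.elim0⟩ hG
  | succ m =>
    by_contra! h
    exact hG (graphContains_pathGraph_of_le_degree hs h)

lemma card_cliques_le_of_exists_degree_lt {d r : ℕ} (hr : 1 ≤ r)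
    (hdeg : ∀ s : Finset V, s.Nonempty → ∃ v ∈ s, #{w ∈ s | G.Adj v w} < d) (s : Finset V) :
    #{A ∈ s.powerset | G.IsNClique r A} ≤ d.choose (r - 1) * #s := by
  induction s using Finset.strongInduction with
  | H s ih =>
  rcases s.eq_empty_or_nonempty with rfl | hs
  · rw [powerset_empty, card_empty, mul_zero, Nat.le_zero, card_eq_zero, filter_eq_empty_iff]
    intro A hA hA_clique
    have := hA_clique.card_eq
    rw [mem_singleton.1 hA, card_empty] at this
    omega
  obtain ⟨v, hv, hv_deg⟩ := hdeg s hs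
  have h_avoid : #{A ∈ s.powerset | G.IsNClique r A ∧ v ∉ A} ≤
      d.choose (r - 1) * #(s.erase v) := by
    refine le_trans (card_le_card fun A hA => ?_) (ih _ (erase_ssubset hv))
    simp only [mem_filter, mem_powerset] at hA ⊢
    exact ⟨fun a ha => mem_erase.2 ⟨ne_of_mem_of_not_mem ha hA.2.2, hA.1 ha⟩, hA.2.1⟩
  -- a clique through `v` is `v` together with `r - 1` neighbours of `v`
  have h_through : #{A ∈ s.powerset | G.IsNClique r A ∧ v ∈ A} ≤ d.choose (r - 1) := by
    calc _ ≤ #({w ∈ s | G.Adj v w}.powersetCard (r - 1)) := by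
          refine card_le_card_of_injOn (·.erase v) (fun A hA => ?_) fun A hA B hB hAB => ?_
          · simp only [coe_filter, mem_powerset, Set.mem_ofPred_eq] at hA
            rw [mem_coe, mem_powersetCard]
            refine ⟨fun w hw => ?_, (hA.2.1.erase_of_mem hA.2.2).card_eq⟩
            obtain ⟨hwv, hwA⟩ := mem_erase.1 hw
            exact mem_filter.2 ⟨hA.1 hwA, hA.2.1.isClique hA.2.2 hwA hwv.symm⟩
          · simp only [coe_filter, Set.mem_ofPred_eq] at hA hB
            rw [← insert_erase hA.2.2, ← insert_erase hB.2.2]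
            exact congrArg (insert v) hAB
      _ = (#{w ∈ s | G.Adj v w}).choose (r - 1) := card_powersetCard _ _
      _ ≤ d.choose (r - 1) := Nat.choose_le_choose _ hv_deg.le
  rw [← card_filter_add_card_filter_not (v ∈ ·), filter_filter, filter_filter,
    ← card_erase_add_one hv]
  nlinarith

lemma card_le_card_isNClique_two [Fintype V] {E : Finset (Sym2 V)} (hE : ∀ p ∈ E, p ∈ G.edgeSet) :
    #E ≤ #{A ∈ univ.powerset | G.IsNClique 2 A} := by
  refine card_le_card_of_injOn Sym2.toFinset (fun p hp => ?_) fun p _ q _ hpq => ?_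
  · have hpG := hE p hp
    induction p using Sym2.ind with
    | h x y =>
      rw [Sym2.toFinset_mk_eq, coe_filter]
      refine ⟨mem_powerset.2 (subset_univ _), ⟨?_, card_pair hpG.ne⟩⟩
      rw [coe_pair, isClique_pair]
      exact fun _ => hpG
  · exact Sym2.ext fun x => by rw [← Sym2.mem_toFinset, hpq, Sym2.mem_toFinset]

end Degeneracy

section BergeCopies

variable {V α : Type*} [DecidableEq V] {H H₁ : Finset (Finset V)} {F : SimpleGraph α} {t : ℕ}

lemma HasBergeCopy.hasHeavyCopy (h : HasBergeCopy H F t) : HasHeavyCopy H F t := by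
  obtain ⟨i, h, hcopy, -⟩ := h
  refine ⟨i, fun x y hxy => ?_⟩
  obtain ⟨hsub, hcard, hmem⟩ := hcopy s(x, y) hxy
  exact hcard ▸ card_le_card fun A hA =>
    mem_filter.2 ⟨hsub hA, hmem A hA x (Sym2.mem_mk_left _ _), hmem A hA y (Sym2.mem_mk_right _ _)⟩

def IsBergeCopy (H : Finset (Finset V)) (F : SimpleGraph α) (t : ℕ) (i : α ↪ V)
    (h : Sym2 α → Finset (Finset V)) : Prop :=
  (∀ e ∈ F.edgeSet, h e ⊆ H ∧ #(h e) = t ∧ ∀ A ∈ h e, ∀ x ∈ e, i x ∈ A) ∧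
    ∀ e ∈ F.edgeSet, ∀ e' ∈ F.edgeSet, e ≠ e' → Disjoint (h e) (h e')

lemma IsBergeCopy.insert {i : α ↪ V} {h : Sym2 α → Finset (Finset V)}
    (hc : IsBergeCopy H₁ F t i h) (hH₁ : H₁ ⊆ H) {g : Sym2 α → Finset V}
    (hg : ∀ e ∈ F.edgeSet, g e ∈ H \ H₁ ∧ ∀ x ∈ e, i x ∈ g e) (hg_inj : Set.InjOn g F.edgeSet) :
    IsBergeCopy H F (t + 1) i fun e => insert (g e) (h e) := by
  have hg_new : ∀ e ∈ F.edgeSet, ∀ e' ∈ F.edgeSet, g e ∉ h e' := fun e he e' he' hmem =>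
    (mem_sdiff.1 (hg e he).1).2 ((hc.1 e' he').1 hmem)
  refine ⟨fun e he => ?_, fun e he e' he' hne => ?_⟩
  · obtain ⟨hsub, hcard, hmem⟩ := hc.1 e he
    refine ⟨insert_subset (mem_sdiff.1 (hg e he).1).1 (hsub.trans hH₁), ?_, ?_⟩
    · rw [card_insert_of_notMem (hg_new e he e he), hcard]
    · simpa only [mem_insert, forall_eq_or_imp] using ⟨(hg e he).2, hmem⟩
  · simp only [disjoint_insert_left, disjoint_insert_right, mem_insert, not_or]
    exact ⟨⟨fun h => hne (hg_inj he he' h.symm), hg_new e' he' e he⟩, hg_new e he e' he',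
      hc.2 e he e' he' hne⟩

end BergeCopies

section PairMatching

variable {V α : Type*} [DecidableEq V] {H : Finset (Finset V)} {F : SimpleGraph α} {t : ℕ}

structure IsPairMatching (H : Finset (Finset V)) (M : Finset (Finset V × Sym2 V)) : Prop where
  fst_mem : ∀ m ∈ M, m.1 ∈ H
  mem_fst_of_mem_snd : ∀ m ∈ M, ∀ v ∈ m.2, v ∈ m.1
  not_isDiag : ∀ m ∈ M, ¬ m.2.IsDiag
  injOn_fst : Set.InjOn Prod.fst (M : Set (Finset V × Sym2 V))
  injOn_snd : Set.InjOn Prod.snd (M : Set (Finset V × Sym2 V))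

structure IsMaximalPairMatching (H : Finset (Finset V)) (M : Finset (Finset V × Sym2 V)) : Prop
    extends IsPairMatching H M where
  mem_snd : ∀ A ∈ H, A ∉ M.image Prod.fst → ∀ u ∈ A, ∀ v ∈ A, u ≠ v → s(u, v) ∈ M.image Prod.snd

lemma exists_isMaximalPairMatching [Fintype V] (H : Finset (Finset V)) :
    ∃ M, IsMaximalPairMatching H M := by
  have hempty : IsPairMatching H ∅ := ⟨by simp, by simp, by simp, by simp, by simp⟩
  obtain ⟨M, hM, hmax⟩ := (Set.toFinite {M | IsPairMatching H M}).exists_maximal ⟨∅, hempty⟩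
  refine ⟨M, hM, fun A hA hA_free u hu v hv huv => ?_⟩
  by_contra hp_free
  have hnew : (A, s(u, v)) ∉ M := fun h => hA_free (mem_image_of_mem Prod.fst h)
  have hM' : IsPairMatching H (insert (A, s(u, v)) M) := by
    refine ⟨?_, ?_, ?_, ?_, ?_⟩
    · simpa only [mem_insert, forall_eq_or_imp] using ⟨hA, hM.fst_mem⟩
    · simp only [mem_insert, forall_eq_or_imp, Sym2.mem_iff, forall_eq_or_imp, forall_eq]
      exact ⟨⟨hu, hv⟩, hM.mem_fst_of_mem_snd⟩
    · simpa only [mem_insert, forall_eq_or_imp, Sym2.mk_isDiag_iff] using ⟨huv, hM.not_isDiag⟩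
    · rw [coe_insert, Set.injOn_insert (by simpa using hnew)]
      exact ⟨hM.injOn_fst, by simpa using hA_free⟩
    · rw [coe_insert, Set.injOn_insert (by simpa using hnew)]
      exact ⟨hM.injOn_snd, by simpa using hp_free⟩
  exact hnew (hmax hM' (subset_insert _ _) (mem_insert_self _ _))

namespace IsPairMatching

variable {M : Finset (Finset V × Sym2 V)}

lemma card_le_choose_two [Fintype V] (hM : IsPairMatching H M) :
    #M ≤ (Fintype.card V).choose 2 := by
  classical
  rw [← card_image_of_injOn hM.injOn_snd, ← card_edgeFinset_top_eq_card_choose_two]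
  refine card_le_card fun p hp => ?_
  obtain ⟨m, hm, rfl⟩ := mem_image.1 hp
  simpa using hM.not_isDiag m hm

lemma card_sdiff_add_card (hM : IsPairMatching H M) : #(H \ M.image Prod.fst) + #M = #H := by
  rw [← card_image_of_injOn hM.injOn_fst]
  exact card_sdiff_add_card_eq_card fun A hA => by
    obtain ⟨m, hm, rfl⟩ := mem_image.1 hA
    exact hM.fst_mem m hm

lemma hasBergeCopy_succ (hM : IsPairMatching H M) {i : α ↪ V} {h : Sym2 α → Finset (Finset V)}
    (hc : IsBergeCopy (H \ M.image Prod.fst) F t i h)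
    (hmatched : ∀ e ∈ F.edgeSet, e.map i ∈ M.image Prod.snd) :
    HasBergeCopy H F (t + 1) := by
  choose! g hg using fun e he => by simpa using hmatched e he
  refine ⟨i, _, hc.insert sdiff_subset (g := g) (fun e he => ⟨?_, fun x hx => ?_⟩) ?_⟩
  · simpa using ⟨hM.fst_mem _ (hg e he), _, hg e he⟩
  · exact hM.mem_fst_of_mem_snd _ (hg e he) _ (Sym2.mem_map.2 ⟨x, hx, rfl⟩)
  · intro e he e' he' hee'
    have := hM.injOn_fst (hg e he) (hg e' he') hee'
    exact Sym2.map.injective i.injective (Prod.ext_iff.1 this).2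

lemma hasBergeCopy_one_of_graphContains (hM : IsPairMatching H M)
    (hF : GraphContains F (fromEdgeSet (M.image Prod.snd : Set (Sym2 V)))) :
    HasBergeCopy H F 1 := by
  obtain ⟨i, hi⟩ := hF
  refine hM.hasBergeCopy_succ (i := i) (h := fun _ => ∅) ⟨by simp, by simp⟩ fun e he => ?_
  induction e using Sym2.ind with
  | h x y => exact ((fromEdgeSet_adj _).1 (hi x y he)).1

end IsPairMatching

lemma IsMaximalPairMatching.hasBergeCopy_succ_succ {M : Finset (Finset V × Sym2 V)}
    (hM : IsMaximalPairMatching H M)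
    (hF : HasBergeCopy (H \ M.image Prod.fst) F (t + 1)) : HasBergeCopy H F (t + 2) := by
  obtain ⟨i, h, hc⟩ := hF
  refine hM.hasBergeCopy_succ hc fun e he => ?_
  obtain ⟨hsub, hcard, hmem⟩ := hc.1 e he
  obtain ⟨A, hA⟩ := card_pos.1 (hcard ▸ t.succ_pos : 0 < #(h e))
  obtain ⟨hAH, hA_free⟩ := mem_sdiff.1 (hsub hA)
  induction e using Sym2.ind with
  | h x y =>
    exact hM.mem_snd A hAH hA_free _ (hmem A hA x (Sym2.mem_mk_left _ _)) _
      (hmem A hA y (Sym2.mem_mk_right _ _)) (i.injective.ne (F.ne_of_adj he))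

end PairMatching

section BergeUpperBound

variable {V : Type*} [Fintype V] [DecidableEq V] {H : Finset (Finset V)}

lemma card_le_of_not_hasBergeCopy_one_pathGraph {r k : ℕ} (hr : 1 ≤ r) (hH : ∀ A ∈ H, #A = r)
    (hfree : ¬ HasBergeCopy H (pathGraph k) 1) :
    #H ≤ ((k - 1) + (k - 1).choose (r - 1)) * Fintype.card V := by
  classical
  obtain ⟨M, hM⟩ := exists_isMaximalPairMatching H
  set G := fromEdgeSet (M.image Prod.snd : Set (Sym2 V))
  have hdeg : ∀ s : Finset V, s.Nonempty → ∃ v ∈ s, #{w ∈ s | G.Adj v w} < k - 1 :=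
    fun _ => exists_degree_lt_of_not_graphContains_pathGraph
      fun h => hfree (hM.hasBergeCopy_one_of_graphContains h)
  have h_matched : #M ≤ (k - 1) * Fintype.card V := calc
    #M = #(M.image Prod.snd) := (card_image_of_injOn hM.injOn_snd).symm
    _ ≤ #{A ∈ univ.powerset | G.IsNClique 2 A} := card_le_card_isNClique_two fun p hp => by
      obtain ⟨m, hm, rfl⟩ := mem_image.1 hp
      rw [edgeSet_fromEdgeSet]
      exact ⟨hp, hM.not_isDiag m hm⟩
    _ ≤ (k - 1).choose (2 - 1) * #univ := card_cliques_le_of_exists_degree_lt (by norm_num) hdeg _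
    _ = (k - 1) * Fintype.card V := by simp
  have h_unmatched : #(H \ M.image Prod.fst) ≤ (k - 1).choose (r - 1) * Fintype.card V := calc
    _ ≤ #{A ∈ univ.powerset | G.IsNClique r A} := by
      refine card_le_card fun A hA => ?_
      obtain ⟨hAH, hA_free⟩ := mem_sdiff.1 hA
      refine mem_filter.2 ⟨mem_powerset.2 (subset_univ A), ⟨fun u hu v hv huv => ?_, hH A hAH⟩⟩
      exact (fromEdgeSet_adj _).2 ⟨hM.mem_snd A hAH hA_free u hu v hv huv, huv⟩
    _ ≤ (k - 1).choose (r - 1) * #univ := card_cliques_le_of_exists_degree_lt hr hdeg _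
    _ = (k - 1).choose (r - 1) * Fintype.card V := by rw [card_univ]
  have h_split := hM.card_sdiff_add_card
  rw [add_mul]
  omega

lemma exists_subset_not_hasBergeCopy_card_le_add_choose_two {α : Type*} {F : SimpleGraph α}
    {t : ℕ} (hfree : ¬ HasBergeCopy H F (t + 2)) :
    ∃ H' ⊆ H, ¬ HasBergeCopy H' F (t + 1) ∧ #H ≤ #H' + (Fintype.card V).choose 2 := by
  obtain ⟨M, hM⟩ := exists_isMaximalPairMatching H
  refine ⟨H \ M.image Prod.fst, sdiff_subset, fun h => hfree (hM.hasBergeCopy_succ_succ h), ?_⟩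
  have := hM.card_sdiff_add_card
  have := hM.card_le_choose_two
  omega

theorem card_le_of_not_hasBergeCopy_pathGraph {r k t : ℕ} (hr : 1 ≤ r) (hH : ∀ A ∈ H, #A = r)
    (hfree : ¬ HasBergeCopy H (pathGraph k) (t + 1)) :
    #H ≤ t * (Fintype.card V).choose 2 + ((k - 1) + (k - 1).choose (r - 1)) * Fintype.card V := by
  induction t generalizing H with
  | zero => simpa using card_le_of_not_hasBergeCopy_one_pathGraph hr hH hfree
  | succ t ih =>
    obtain ⟨H', hH', hfree', hcard⟩ :=
      exists_subset_not_hasBergeCopy_card_le_add_choose_two hfree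
    have := ih (fun A hA => hH A (hH' hA)) hfree'
    rw [add_one_mul]
    omega

end BergeUpperBound

section HeavyLowerBound

variable {V : Type*} [DecidableEq V] {H : Finset (Finset V)}

lemma not_hasHeavyCopy_pathGraph_of_card_filter_le {m k : ℕ} (S : Finset V)
    (hS : ∀ u ∉ S, ∀ v ∉ S, u ≠ v → #{A ∈ H | u ∈ A ∧ v ∈ A} ≤ m) (hk : 2 * #S + 2 ≤ k) :
    ¬ HasHeavyCopy H (pathGraph k) (m + 1) := by
  rintro ⟨i, hi⟩
  -- The edges `{2a, 2a + 1}`, `a ≤ #S`, of the path are disjoint and each has an endpoint in `S`.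
  let x : Fin (#S + 1) → Fin k := fun a => ⟨2 * a, by omega⟩
  let y : Fin (#S + 1) → Fin k := fun a => ⟨2 * a + 1, by omega⟩
  have hcover : ∀ a, i (x a) ∈ S ∨ i (y a) ∈ S := by
    intro a
    by_contra! h
    have := hi (x a) (y a) (pathGraph_adj.2 (Or.inl rfl))
    have := hS _ h.1 _ h.2 (i.injective.ne (by simp [x, y, Fin.ext_iff]))
    omega
  let f a := if i (x a) ∈ S then i (x a) else i (y a)
  have hf_mem : ∀ a ∈ (univ : Finset (Fin (#S + 1))), f a ∈ S := fun a _ => by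
    unfold f
    split_ifs with h
    exacts [h, (hcover a).resolve_left h]
  have hf_inj : Set.InjOn f (univ : Finset (Fin (#S + 1))) := fun a _ b _ hab => by
    unfold f at hab
    split_ifs at hab <;>
    · have := congrArg Fin.val (i.injective hab)
      simp only [x, y] at this
      ext
      omega
  simpa using card_le_card_of_injOn f hf_mem hf_inj

end HeavyLowerBound

section BlockPairs

variable {V ι : Type*} [DecidableEq V] [Fintype ι] {B : ι → Finset V} {O : Finset V}

def blockPairHypergraph (B : ι → Finset V) (O : Finset V) : Finset (Finset V) :=
  (univ ×ˢ O.powersetCard 2).image fun x => B x.1 ∪ x.2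

lemma card_of_mem_blockPairHypergraph (hBO : ∀ j, Disjoint (B j) O) {q : ℕ}
    (hB : ∀ j, #(B j) = q) : ∀ A ∈ blockPairHypergraph B O, #A = q + 2 := by
  intro A hA
  obtain ⟨⟨j, p⟩, hjp, rfl⟩ := mem_image.1 hA
  rw [mem_product, mem_powersetCard] at hjp
  rw [card_union_of_disjoint (disjoint_of_subset_right hjp.2.1 (hBO j)), hB, hjp.2.2]

lemma card_filter_blockPairHypergraph_le (hBO : ∀ j, Disjoint (B j) O) {u v : V} (hu : u ∈ O)
    (hv : v ∈ O) (huv : u ≠ v) :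
    #{A ∈ blockPairHypergraph B O | u ∈ A ∧ v ∈ A} ≤ Fintype.card ι := by
  calc _ ≤ #(univ.image fun j => B j ∪ {u, v}) := card_le_card fun A hA => by
        obtain ⟨hA, huA, hvA⟩ := mem_filter.1 hA
        obtain ⟨⟨j, p⟩, hjp, rfl⟩ := mem_image.1 hA
        rw [mem_product, mem_powersetCard] at hjp
        have hp : ∀ w ∈ O, w ∈ B j ∪ p → w ∈ p := fun w hw hwA =>
          (mem_union.1 hwA).resolve_left fun hwB => disjoint_left.1 (hBO j) hwB hw
        have hp_eq : {u, v} = p := eq_of_subset_of_card_le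
          (insert_subset (hp u hu huA) (singleton_subset_iff.2 (hp v hv hvA)))
          (by rw [hjp.2.2, card_pair huv])
        exact mem_image.2 ⟨j, mem_univ j, by rw [hp_eq]⟩
    _ ≤ Fintype.card ι := card_image_le

lemma card_blockPairHypergraph (hBO : ∀ j, Disjoint (B j) O) (hB_inj : Function.Injective B) :
    #(blockPairHypergraph B O) = Fintype.card ι * (#O).choose 2 := by
  have hsplit : ∀ j, ∀ p ⊆ O, (B j ∪ p) \ O = B j ∧ (B j ∪ p) ∩ O = p := fun j p hp => by
    rw [union_sdiff_distrib, sdiff_eq_self_of_disjoint (hBO j), sdiff_eq_empty_iff_subset.2 hp,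
      union_empty, union_inter_distrib_right, disjoint_iff_inter_eq_empty.1 (hBO j),
      inter_eq_left.2 hp, empty_union]
    exact ⟨rfl, rfl⟩
  rw [blockPairHypergraph, card_image_of_injOn, card_product, card_univ, card_powersetCard]
  rintro ⟨j, p⟩ hjp ⟨j', p'⟩ hjp' h
  simp only [coe_product, coe_univ, Set.mem_prod, Set.mem_univ, true_and, mem_coe,
    mem_powersetCard] at hjp hjp' h
  refine Prod.ext (hB_inj ?_) ?_
  · rw [← (hsplit j p hjp.1).1, h, (hsplit j' p' hjp'.1).1]
  · rw [← (hsplit j p hjp.1).2, h, (hsplit j' p' hjp'.1).2]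

lemma exists_uniform_card_filter_le [Fintype V] {m q : ℕ} (hq : 1 ≤ q)
    (hV : m * q ≤ Fintype.card V) :
    ∃ (H : Finset (Finset V)) (S : Finset V), #S = m * q ∧ (∀ A ∈ H, #A = q + 2) ∧
      (∀ u ∉ S, ∀ v ∉ S, u ≠ v → #{A ∈ H | u ∈ A ∧ v ∈ A} ≤ m) ∧
      #H = m * (Fintype.card V - m * q).choose 2 := by
  obtain ⟨e⟩ := Function.Embedding.nonempty_of_card_le (α := Fin m × Fin q) (by simpa using hV)
  let B : Fin m → Finset V := fun j =>
    univ.map ⟨fun c => e (j, c), fun c c' h => by simpa using e.injective h⟩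
  let S := univ.map e
  have hBO : ∀ j, Disjoint (B j) Sᶜ := fun j => disjoint_compl_right_iff.2 fun v hv => by
    obtain ⟨c, -, rfl⟩ := mem_map.1 hv
    exact mem_map_of_mem e (mem_univ _)
  have hB_inj : Function.Injective B := fun j j' h => by
    have : e (j, ⟨0, hq⟩) ∈ B j' := h ▸ mem_map_of_mem _ (mem_univ _)
    obtain ⟨c, -, hc⟩ := mem_map.1 this
    exact (Prod.ext_iff.1 (e.injective hc)).1.symm
  refine ⟨blockPairHypergraph B Sᶜ, S, by simp [S], card_of_mem_blockPairHypergraph hBO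
    fun j => by simp [B], fun u hu v hv huv => ?_, ?_⟩
  · simpa using card_filter_blockPairHypergraph_le hBO (mem_compl.2 hu) (mem_compl.2 hv) huv
  · rw [card_blockPairHypergraph hBO hB_inj, card_compl]
    simp [S]

end BlockPairs

lemma choose_two_le_choose_two_sub_add_mul (s n : ℕ) : n.choose 2 ≤ (n - s).choose 2 + s * n := by
  induction s with
  | zero => simp
  | succ s ih =>
    have hstep : (n - s).choose 2 ≤ (n - (s + 1)).choose 2 + n := by
      rcases Nat.eq_zero_or_pos (n - s) with h | h
      · simp [h]
      · rw [show n - s = n - (s + 1) + 1 by omega, Nat.choose_succ_succ', Nat.choose_one_right]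
        simp only [Nat.reduceAdd]
        omega
    rw [add_one_mul]
    omega

lemma tendsto_div_choose_two_of_mem_Icc {c s D : ℕ} {f : ℕ → ℕ}
    (hf : ∀ᶠ n in atTop, f n ∈ Set.Icc (c * (n - s).choose 2) (c * n.choose 2 + D * n)) :
    Tendsto (fun n => (f n : ℝ) / n.choose 2) atTop (𝓝 c) := by
  have hratio : Tendsto (fun n : ℕ => (n : ℝ) / n.choose 2) atTop (𝓝 0) := by
    have h_sub : Tendsto (fun n : ℕ => (n : ℝ) - 1) atTop atTop :=
      tendsto_atTop_add_const_right _ (-1) tendsto_natCast_atTop_atTop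
    refine (tendsto_const_nhds (x := (2 : ℝ)).div_atTop h_sub).congr' ?_
    filter_upwards [eventually_ge_atTop 2] with n hn
    have : (2 : ℝ) ≤ n := by exact_mod_cast hn
    rw [Nat.cast_choose_two]
    field_simp
  have hlo : Tendsto (fun n : ℕ => (c : ℝ) - c * s * ((n : ℝ) / n.choose 2)) atTop (𝓝 c) := by
    simpa using tendsto_const_nhds.sub (hratio.const_mul ((c : ℝ) * s))
  have hhi : Tendsto (fun n : ℕ => (c : ℝ) + D * ((n : ℝ) / n.choose 2)) atTop (𝓝 c) := by
    simpa using tendsto_const_nhds.add (hratio.const_mul (D : ℝ))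
  refine tendsto_of_tendsto_of_tendsto_of_le_of_le' hlo hhi ?_ ?_ <;>
    filter_upwards [hf, eventually_ge_atTop 2] with n ⟨hlow, hup⟩ hn <;>
    have hC : (0 : ℝ) < n.choose 2 := by exact_mod_cast Nat.choose_pos hn
  · rw [le_div_iff₀ hC, sub_mul, mul_assoc, div_mul_cancel₀ _ hC.ne']
    have h_nat : c * n.choose 2 ≤ f n + c * s * n := by
      have := Nat.mul_le_mul_left c (choose_two_le_choose_two_sub_add_mul s n)
      rw [mul_add, ← mul_assoc] at this
      omega
    have h_real : (c : ℝ) * n.choose 2 ≤ f n + c * s * n := by exact_mod_cast h_nat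
    linarith
  · rw [div_le_iff₀ hC, add_mul, mul_assoc, div_mul_cancel₀ _ hC.ne']
    exact_mod_cast hup

section TuranNumbers

variable {α : Type*} {n r t B : ℕ} {F : SimpleGraph α}

lemma exHeavy_le (h : ∀ H : Finset (Finset (Fin n)), (∀ A ∈ H, #A = r) →
    ¬ HasHeavyCopy H F t → #H ≤ B) : exHeavy n r t F ≤ B :=
  csSup_le' fun _ ⟨H, hH, hF, hm⟩ => hm ▸ h H hH hF

lemma le_exHeavy (h : ∀ H : Finset (Finset (Fin n)), (∀ A ∈ H, #A = r) →
    ¬ HasHeavyCopy H F t → #H ≤ B) {H : Finset (Finset (Fin n))} (hH : ∀ A ∈ H, #A = r)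
    (hF : ¬ HasHeavyCopy H F t) : #H ≤ exHeavy n r t F :=
  le_csSup ⟨B, fun _ ⟨H, hH, hF, hm⟩ => hm ▸ h H hH hF⟩ ⟨H, hH, hF, rfl⟩

lemma exBerge_le (h : ∀ H : Finset (Finset (Fin n)), (∀ A ∈ H, #A = r) →
    ¬ HasBergeCopy H F t → #H ≤ B) : exBerge n r t F ≤ B :=
  csSup_le' fun _ ⟨H, hH, hF, hm⟩ => hm ▸ h H hH hF

lemma le_exBerge (h : ∀ H : Finset (Finset (Fin n)), (∀ A ∈ H, #A = r) →
    ¬ HasBergeCopy H F t → #H ≤ B) {H : Finset (Finset (Fin n))} (hH : ∀ A ∈ H, #A = r)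
    (hF : ¬ HasBergeCopy H F t) : #H ≤ exBerge n r t F :=
  le_csSup ⟨B, fun _ ⟨H, hH, hF, hm⟩ => hm ▸ h H hH hF⟩ ⟨H, hH, hF, rfl⟩

end TuranNumbers

lemma exHeavy_mem_Icc_and_exBerge_mem_Icc {m q k n : ℕ} (hq : 1 ≤ q) (hk : 2 * (m * q) + 2 ≤ k)
    (hn : m * q ≤ n) :
    exHeavy n (q + 2) (m + 1) (pathGraph k) ∈ Set.Icc (m * (n - m * q).choose 2)
        (m * n.choose 2 + (k - 1 + (k - 1).choose (q + 1)) * n) ∧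
      exBerge n (q + 2) (m + 1) (pathGraph k) ∈ Set.Icc (m * (n - m * q).choose 2)
        (m * n.choose 2 + (k - 1 + (k - 1).choose (q + 1)) * n) := by
  have hupper : ∀ H : Finset (Finset (Fin n)), (∀ A ∈ H, #A = q + 2) →
      ¬ HasBergeCopy H (pathGraph k) (m + 1) →
      #H ≤ m * n.choose 2 + (k - 1 + (k - 1).choose (q + 1)) * n := fun H hH hF => by
    simpa using card_le_of_not_hasBergeCopy_pathGraph (by omega) hH hF
  obtain ⟨H, S, hS, hH, hpairs, hcard⟩ := exists_uniform_card_filter_le (V := Fin n) hq (by simpa)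
  have hfree := not_hasHeavyCopy_pathGraph_of_card_filter_le (k := k) S hpairs (by omega)
  rw [Fintype.card_fin] at hcard
  refine ⟨⟨hcard ▸ le_exHeavy (fun H hH hF => hupper H hH fun h => hF h.hasHeavyCopy) hH hfree,
    exHeavy_le fun H hH hF => hupper H hH fun h => hF h.hasHeavyCopy⟩,
    ⟨hcard ▸ le_exBerge hupper hH fun h => hfree h.hasHeavyCopy, exBerge_le hupper⟩⟩

theorem exHeavy_exBerge_path_asymptotics (r t k : ℕ) (hr : 3 ≤ r) (ht : 2 ≤ t)
    (hk : 2 * (t - 1) * (r - 2) + 2 ≤ k) :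
    Filter.Tendsto
      (fun n : ℕ => (exHeavy n r t (SimpleGraph.pathGraph k) : ℝ) / (n.choose 2))
      Filter.atTop (nhds ((t : ℝ) - 1)) ∧
    Filter.Tendsto
      (fun n : ℕ => (exBerge n r t (SimpleGraph.pathGraph k) : ℝ) / (n.choose 2))
      Filter.atTop (nhds ((t : ℝ) - 1)) := by
  obtain ⟨m, rfl⟩ : ∃ m, t = m + 1 := ⟨t - 1, by omega⟩
  obtain ⟨q, rfl⟩ : ∃ q, r = q + 2 := ⟨r - 2, by omega⟩
  have hk' : 2 * (m * q) + 2 ≤ k := by simpa [mul_assoc] using hk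
  have hbounds := (eventually_ge_atTop (m * q)).mono fun n hn =>
    exHeavy_mem_Icc_and_exBerge_mem_Icc (by omega) hk' hn
  rw [show ((m + 1 : ℕ) : ℝ) - 1 = m by push_cast; ring]
  exact ⟨tendsto_div_choose_two_of_mem_Icc (hbounds.mono fun _ h => h.1),
    tendsto_div_choose_two_of_mem_Icc (hbounds.mono fun _ h => h.2)⟩
end

section
/- For any r ≥ 2, ex_3(n, B_2 S_r) ≤ (1 + o(1))·n²/4, where S_r is the star with r edges; i.e., any 3-uniform hypergraph on n vertices with no 2-wise Berge copy of S_r has at most n²/4 + O(n) hyperedges. -/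
/-!
Call a pair heavy if it lies in at least two hyperedges. Greedily, a vertex with `7r` heavy
neighbours is the centre of a 2-wise Berge star `S_r`, so every vertex has fewer than `7r`
heavy neighbours. A hyperedge with at most one private pair (a pair lying in no other
hyperedge) has two heavy pairs, which meet in a vertex `v`, so it is `{v, x, y}` with `x, y`
heavy neighbours of `v`: there are at most `49 r² n` of these. Every other hyperedge owns
two private pairs, and distinct hyperedges own distinct private pairs, so there are at most
`n.choose 2 / 2 ≤ n² / 4` of them.
-/

open Finset

/-- The star with `r` edges: vertex `0` joined to `r` leaves. -/
def starGraph (r : ℕ) : SimpleGraph (Fin (r + 1)) :=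
  SimpleGraph.fromRel (fun x _ => x = 0)

variable {V : Type*}

lemma starGraph_edge_eq {r : ℕ} {e : Sym2 (Fin (r + 1))} (he : e ∈ (starGraph r).edgeSet) :
    e.sup ≠ 0 ∧ e = s(0, e.sup) := by
  induction e using Sym2.ind with
  | _ x y =>
    simp only [SimpleGraph.mem_edgeSet, starGraph, SimpleGraph.fromRel_adj] at he
    obtain ⟨hxy, rfl | rfl⟩ := he
    · simpa [Fin.zero_le] using hxy.symm
    · simpa [Fin.zero_le, Sym2.eq_swap] using hxy

theorem hasBergeCopy_starGraph {H : Finset (Finset V)} {t r : ℕ} {v : V} {T : Finset V}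
    (hT : #T = r) (hvT : v ∉ T) (g : V → Finset (Finset V))
    (hg : ∀ u ∈ T, g u ⊆ H ∧ #(g u) = t ∧ ∀ A ∈ g u, v ∈ A ∧ u ∈ A)
    (hdisj : (T : Set V).PairwiseDisjoint g) :
    HasBergeCopy H (starGraph r) t := by
  let leaves : Fin r ↪ V :=
    (T.equivFinOfCardEq hT).symm.toEmbedding.trans (Function.Embedding.subtype (· ∈ T))
  have leaves_mem : ∀ j, leaves j ∈ T := fun j => ((T.equivFinOfCardEq hT).symm j).2
  let i : Fin (r + 1) ↪ V :=
    ⟨Fin.cons v leaves, Fin.cons_injective_iff.2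
      ⟨fun ⟨j, hj⟩ => hvT (hj ▸ leaves_mem j), leaves.injective⟩⟩
  have i_mem : ∀ w : Fin (r + 1), w ≠ 0 → i w ∈ T := by
    intro w hw
    obtain ⟨j, rfl⟩ := Fin.exists_succ_eq.2 hw
    exact leaves_mem j
  refine ⟨i, fun e => g (i e.sup), fun e he => ?_, fun e he e' he' hne => ?_⟩
  · obtain ⟨hw, he⟩ := starGraph_edge_eq he
    obtain ⟨hsub, hcard, hmem⟩ := hg _ (i_mem _ hw)
    refine ⟨hsub, hcard, fun A hA x hx => ?_⟩
    rw [he, Sym2.mem_iff] at hx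
    rcases hx with rfl | rfl
    · exact (hmem A hA).1
    · exact (hmem A hA).2
  · obtain ⟨hw, he⟩ := starGraph_edge_eq he
    obtain ⟨hw', he'⟩ := starGraph_edge_eq he'
    refine hdisj (i_mem _ hw) (i_mem _ hw') fun h => hne ?_
    rw [he, he', i.injective h]

variable [DecidableEq V]

def codegree (H : Finset (Finset V)) (x y : V) : ℕ :=
  #(H.filter fun A => x ∈ A ∧ y ∈ A)

def heavyNeighbors [Fintype V] (H : Finset (Finset V)) (t : ℕ) (v : V) : Finset V :=
  univ.filter fun u => u ≠ v ∧ t ≤ codegree H v u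

/-- Greedy: a chosen leaf `u` together with its `t` hyperedges through `v` and `u` blocks at
most `t * k + 1` candidates. -/
theorem exists_pairwiseDisjoint_of_le_card {H : Finset (Finset V)} {k t : ℕ}
    (hk : ∀ A ∈ H, #A ≤ k) (v : V) (m : ℕ) (L : Finset V)
    (hL : ∀ u ∈ L, t ≤ codegree H v u) (hm : (t * k + 1) * m ≤ #L) :
    ∃ T ⊆ L, #T = m ∧ ∃ g : V → Finset (Finset V),
      (∀ u ∈ T, g u ⊆ H ∧ #(g u) = t ∧ ∀ A ∈ g u, v ∈ A ∧ u ∈ A) ∧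
      (T : Set V).PairwiseDisjoint g := by
  induction m generalizing L with
  | zero => exact ⟨∅, empty_subset _, rfl, fun _ => ∅, by simp, by simp⟩
  | succ m ih =>
    obtain ⟨u, hu⟩ : L.Nonempty :=
      card_pos.1 ((Nat.mul_pos (Nat.succ_pos _) m.succ_pos).trans_le hm)
    obtain ⟨S, hS, hScard⟩ := exists_subset_card_eq (hL u hu)
    let blocked := insert u (S.biUnion id)
    have hblocked : #blocked ≤ t * k + 1 := by
      refine (card_insert_le _ _).trans (Nat.succ_le_succ ?_)
      rw [← hScard]
      exact card_biUnion_le_card_mul _ _ _ fun A hA => hk A (mem_filter.1 (hS hA)).1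
    obtain ⟨T, hTL, hTcard, g, hg, hdisj⟩ :=
      ih (L \ blocked) (fun w hw => hL w (mem_sdiff.1 hw).1)
        (by have := le_card_sdiff blocked L; rw [mul_add_one] at hm; omega)
    have huT : u ∉ T := fun h => (mem_sdiff.1 (hTL h)).2 (mem_insert_self _ _)
    have hupdate : ∀ w ∈ T, Function.update g u S w = g w :=
      fun w hw => Function.update_of_ne (ne_of_mem_of_not_mem hw huT) _ _
    refine ⟨insert u T, insert_subset hu (hTL.trans sdiff_subset),
      by rw [card_insert_of_notMem huT, hTcard], Function.update g u S, ?_, ?_⟩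
    · intro w hw
      rcases mem_insert.1 hw with rfl | hw
      · simp only [Function.update_self]
        exact ⟨hS.trans (filter_subset _ _), hScard, fun A hA => (mem_filter.1 (hS hA)).2⟩
      · rw [hupdate w hw]
        exact hg w hw
    · rw [coe_insert]
      refine (hdisj.mono_on fun w hw => (hupdate w hw).le).insert fun w hw _ => ?_
      rw [Function.update_self, hupdate w hw, Finset.disjoint_left]
      intro A hAS hAg
      have hwA : w ∈ A := ((hg w hw).2.2 A hAg).2
      exact (mem_sdiff.1 (hTL hw)).2 (mem_insert_of_mem (mem_biUnion.2 ⟨A, hAS, hwA⟩))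

theorem card_heavyNeighbors_lt [Fintype V] {H : Finset (Finset V)} {k t r : ℕ}
    (hk : ∀ A ∈ H, #A ≤ k) (hB : ¬ HasBergeCopy H (starGraph r) t) (v : V) :
    #(heavyNeighbors H t v) < (t * k + 1) * r := by
  by_contra! hcard
  obtain ⟨T, hTL, hT, g, hg, hdisj⟩ := exists_pairwiseDisjoint_of_le_card hk v r _
    (fun u hu => (mem_filter.1 hu).2.2) hcard
  exact hB (hasBergeCopy_starGraph hT (fun h => (mem_filter.1 (hTL h)).2.1 rfl) g hg hdisj)

/-- The faces `A.erase z` of `A` contained in no other hyperedge of `H`, indexed by the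
omitted vertex `z`. -/
def privateFaces (H : Finset (Finset V)) (A : Finset V) : Finset V :=
  A.filter fun z => H.filter (A.erase z ⊆ ·) ⊆ {A}

lemma privateFaces_subset {H : Finset (Finset V)} {A : Finset V} : privateFaces H A ⊆ A :=
  filter_subset _ _

theorem sum_card_privateFaces_le [Fintype V] {H : Finset (Finset V)} {k : ℕ}
    (hH : ∀ A ∈ H, #A = k) :
    ∑ A ∈ H, #(privateFaces H A) ≤ (Fintype.card V).choose (k - 1) := by
  have hinj : ∀ A, Set.InjOn A.erase (privateFaces H A) :=
    fun A => A.erase_injOn.mono privateFaces_subset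
  have hdisj : (H : Set (Finset V)).PairwiseDisjoint
      fun A => (privateFaces H A).image A.erase := by
    intro A hA A' hA' hne
    refine Finset.disjoint_left.2 fun f hf hf' => hne ?_
    obtain ⟨z, hz, rfl⟩ := mem_image.1 hf
    obtain ⟨z', hz', hzz'⟩ := mem_image.1 hf'
    have hA'z : A' ∈ H.filter (A.erase z ⊆ ·) := mem_filter.2 ⟨hA', hzz' ▸ erase_subset _ _⟩
    exact (mem_singleton.1 ((mem_filter.1 hz).2 hA'z)).symm
  calc ∑ A ∈ H, #(privateFaces H A)
      = ∑ A ∈ H, #((privateFaces H A).image A.erase) :=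
        sum_congr rfl fun A _ => (card_image_of_injOn (hinj A)).symm
    _ = #(H.biUnion fun A => (privateFaces H A).image A.erase) := (card_biUnion hdisj).symm
    _ ≤ #((univ : Finset V).powersetCard (k - 1)) := by
        refine card_le_card fun f hf => ?_
        obtain ⟨A, hA, hf⟩ := mem_biUnion.1 hf
        obtain ⟨z, hz, rfl⟩ := mem_image.1 hf
        rw [mem_powersetCard, card_erase_of_mem (privateFaces_subset hz), hH A hA]
        exact ⟨subset_univ _, rfl⟩
    _ = (Fintype.card V).choose (k - 1) := by rw [card_powersetCard, card_univ]

theorem two_mul_card_filter_le [Fintype V] {H : Finset (Finset V)} {k : ℕ}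
    (hH : ∀ A ∈ H, #A = k) :
    2 * #(H.filter fun A => 2 ≤ #(privateFaces H A)) ≤ (Fintype.card V).choose (k - 1) :=
  calc 2 * #(H.filter fun A => 2 ≤ #(privateFaces H A))
      ≤ ∑ A ∈ H.filter (fun A => 2 ≤ #(privateFaces H A)), #(privateFaces H A) := by
        rw [mul_comm, ← smul_eq_mul, ← sum_const]
        exact sum_le_sum fun A hA => (mem_filter.1 hA).2
    _ ≤ ∑ A ∈ H, #(privateFaces H A) := sum_le_sum_of_subset (filter_subset _ _)
    _ ≤ _ := sum_card_privateFaces_le hH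

theorem mem_heavyNeighbors_of_notMem_privateFaces [Fintype V] {H : Finset (Finset V)}
    {A : Finset V} {x y z : V} (hA : A ∈ H) (hz : z ∈ A) (hzA : z ∉ privateFaces H A)
    (hx : x ∈ A.erase z) (hy : y ∈ A.erase z) (hxy : x ≠ y) : y ∈ heavyNeighbors H 2 x := by
  simp only [privateFaces, mem_filter, hz, true_and, not_subset, mem_singleton] at hzA
  obtain ⟨B, ⟨hB, hzB⟩, hBA⟩ := hzA
  refine mem_filter.2 ⟨mem_univ _, hxy.symm, ?_⟩
  calc 2 = #({A, B} : Finset (Finset V)) := (card_pair (Ne.symm hBA)).symm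
    _ ≤ codegree H x y := card_le_card <| by
        simp only [insert_subset_iff, singleton_subset_iff, mem_filter]
        exact ⟨⟨hA, mem_of_mem_erase hx, mem_of_mem_erase hy⟩, hB, hzB hx, hzB hy⟩

/-- Two shared faces of a triple meet in a vertex `v`; both other vertices are heavy
neighbours of `v`. -/
theorem exists_eq_triple_of_card_privateFaces_lt [Fintype V] {H : Finset (Finset V)}
    {A : Finset V} (hA : A ∈ H) (hA3 : #A = 3) (hpriv : #(privateFaces H A) < 2) :
    ∃ v, ∃ x ∈ heavyNeighbors H 2 v, ∃ y ∈ heavyNeighbors H 2 v, A = {v, x, y} := by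
  have hshared : 1 < #(A \ privateFaces H A) := by
    rw [card_sdiff_of_subset privateFaces_subset]
    omega
  obtain ⟨x, hx, y, hy, hxy⟩ := one_lt_card.1 hshared
  rw [mem_sdiff] at hx hy
  obtain ⟨v, hv, hvy⟩ := exists_mem_ne (by rw [card_erase_of_mem hx.1, hA3]; decide) y
  have hvx := ne_of_mem_erase hv
  have hv' : v ∈ A.erase y := mem_erase.2 ⟨hvy, mem_of_mem_erase hv⟩
  refine ⟨v, x, mem_heavyNeighbors_of_notMem_privateFaces hA hy.1 hy.2 hv'
      (mem_erase.2 ⟨hxy, hx.1⟩) hvx,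
    y, mem_heavyNeighbors_of_notMem_privateFaces hA hx.1 hx.2 hv
      (mem_erase.2 ⟨hxy.symm, hy.1⟩) hvy, ?_⟩
  refine (eq_of_subset_of_card_le ?_ ?_).symm
  · simp only [insert_subset_iff, singleton_subset_iff]
    exact ⟨mem_of_mem_erase hv, hx.1, hy.1⟩
  · rw [hA3, card_eq_three.2 ⟨v, x, y, hvx, hvy, hxy, rfl⟩]

theorem card_filter_card_privateFaces_lt_le [Fintype V] {H : Finset (Finset V)}
    (hH : ∀ A ∈ H, #A = 3) :
    #(H.filter fun A => #(privateFaces H A) < 2) ≤ ∑ v, #(heavyNeighbors H 2 v) ^ 2 := by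
  calc #(H.filter fun A => #(privateFaces H A) < 2)
      ≤ #(univ.biUnion fun v =>
          (heavyNeighbors H 2 v ×ˢ heavyNeighbors H 2 v).image
            fun p => ({v, p.1, p.2} : Finset V)) := by
        refine card_le_card fun A hA => ?_
        obtain ⟨hA, hpriv⟩ := mem_filter.1 hA
        obtain ⟨v, x, hx, y, hy, rfl⟩ := exists_eq_triple_of_card_privateFaces_lt hA (hH A hA) hpriv
        exact mem_biUnion.2 ⟨v, mem_univ _, mem_image.2 ⟨(x, y), mem_product.2 ⟨hx, hy⟩, rfl⟩⟩
    _ ≤ ∑ v, #((heavyNeighbors H 2 v ×ˢ heavyNeighbors H 2 v).image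
          fun p => ({v, p.1, p.2} : Finset V)) := card_biUnion_le
    _ ≤ ∑ v, #(heavyNeighbors H 2 v) ^ 2 := sum_le_sum fun v _ => by
        rw [sq, ← card_product]
        exact card_image_le

theorem card_le_of_not_hasBergeCopy_starGraph [Fintype V] {H : Finset (Finset V)} {r : ℕ}
    (hH : ∀ A ∈ H, #A = 3) (hB : ¬ HasBergeCopy H (starGraph r) 2) :
    2 * #H ≤ (Fintype.card V).choose 2 + 2 * (Fintype.card V * (7 * r) ^ 2) := by
  have hgood : 2 * #(H.filter fun A => 2 ≤ #(privateFaces H A)) ≤ (Fintype.card V).choose 2 :=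
    two_mul_card_filter_le hH
  have hbad : #(H.filter fun A => #(privateFaces H A) < 2) ≤ Fintype.card V * (7 * r) ^ 2 :=
    calc #(H.filter fun A => #(privateFaces H A) < 2) ≤ ∑ v, #(heavyNeighbors H 2 v) ^ 2 :=
          card_filter_card_privateFaces_lt_le hH
      _ ≤ ∑ _v : V, (7 * r) ^ 2 := sum_le_sum fun v _ =>
          Nat.pow_le_pow_left (card_heavyNeighbors_lt (fun A hA => (hH A hA).le) hB v).le 2
      _ = Fintype.card V * (7 * r) ^ 2 := by simp
  have hsplit := card_filter_add_card_filter_not (s := H) (p := fun A => 2 ≤ #(privateFaces H A))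
  simp only [not_le] at hsplit
  omega

theorem exBerge_star_upper_general (r : ℕ) :
    ∃ C : ℝ, ∀ (n : ℕ) (H : Finset (Finset (Fin n))),
      (∀ A ∈ H, A.card = 3) → ¬ HasBergeCopy H (starGraph r) 2 →
      (H.card : ℝ) ≤ (n : ℝ) ^ 2 / 4 + C * (n : ℝ) := by
  refine ⟨49 * r ^ 2, fun n H hH hB => ?_⟩
  have hcount : (2 * #H : ℝ) ≤ n.choose 2 + 2 * (n * (7 * r) ^ 2) := by
    exact_mod_cast Fintype.card_fin n ▸ card_le_of_not_hasBergeCopy_starGraph hH hB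
  have hchoose : (n.choose 2 : ℝ) ≤ n ^ 2 / 2 := by
    rw [Nat.cast_choose_two]
    nlinarith [n.cast_nonneg (α := ℝ)]
  linarith

theorem exBerge_star_upper (r : ℕ) (hr : 2 ≤ r) :
    ∃ C : ℝ, ∀ (n : ℕ) (H : Finset (Finset (Fin n))),
      (∀ A ∈ H, A.card = 3) → ¬ HasBergeCopy H (starGraph r) 2 →
      (H.card : ℝ) ≤ (n : ℝ) ^ 2 / 4 + C * (n : ℝ) :=
  exBerge_star_upper_general r
end
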